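/- arXiv:1206.5963 — 8 statements merged into one kernel-verified Lean document; each statement's English description precedes it below -/
import Mathlib

section
/- Let H_II(q,p,t,α) = p²/2 − (q² + t/2)p − αq. Then for any field elements q, p, t, α with p ≠ 0, one has H_II(q + α/p, p, t, −α) = H_II(q, p, t, α). -/
/-- Hamiltonian of the second Painlevé equation. -/
noncomputable def HII {K : Type*} [Field K] (q p t α : K) : K :=
  p ^ 2 / 2 - (q ^ 2 + t / 2) * p - α * q

/-- The Bäcklund transformation `s(q,p) = (q + α/p, p)` preserves the P_II Hamiltonian
while flipping the sign of the parameter `α`. -/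
theorem stmt0 {K : Type*} [Field K] (q p t α : K) (hp : p ≠ 0) :
    HII (q + α / p) p t (-α) = HII q p t α := by
  unfold HII
  field_simp
  ring
end

section
/- Suppose q, p : ℝ → ℝ are differentiable functions satisfying the Hamiltonian system of P_II(α): q'(t) = p(t) − q(t)² − t/2 and p'(t) = 2q(t)p(t) + α, and suppose p(t) ≠ 0 for all t. Then the functions Q = q + α/p and P = p satisfy the Hamiltonian system of P_II(−α): Q' = P − Q² − t/2 and P' = 2QP − α. -/
/-! The transformation fixes `p` and shifts `q` by `α / p`, whose derivative along the flow is
`-α p' / p² = -α (2qp + α) / p²`; this is exactly the correction turning `p - q² - t/2` into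
`p - (q + α/p)² - t/2`, while `p' = 2qp + α` rewrites as `2 (q + α/p) p - α`. -/

theorem HasDerivAt.add_const_div {𝕜 : Type*} [NontriviallyNormedField 𝕜] {q p : 𝕜 → 𝕜}
    {q' p' x : 𝕜} (c : 𝕜) (hq : HasDerivAt q q' x) (hp : HasDerivAt p p' x) (hx : p x ≠ 0) :
    HasDerivAt (fun s => q s + c / p s) (q' - c * p' / p x ^ 2) x :=
  (hq.fun_add ((hasDerivAt_const x c).fun_div hp hx)).congr_deriv (by ring)

/-- The Bäcklund transformation `s(q,p) = (q + α/p, p)` maps solutions of the Hamiltonian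
system of P_II(α) to solutions of the Hamiltonian system of P_II(−α). -/
theorem stmt2 (α : ℝ) (q p : ℝ → ℝ)
    (hq : Differentiable ℝ q) (hp : Differentiable ℝ p)
    (hp0 : ∀ t, p t ≠ 0)
    (h1 : ∀ t, deriv q t = p t - q t ^ 2 - t / 2)
    (h2 : ∀ t, deriv p t = 2 * q t * p t + α) :
    (∀ t, deriv (fun s => q s + α / p s) t
        = p t - (q t + α / p t) ^ 2 - t / 2) ∧
    (∀ t, deriv p t = 2 * (q t + α / p t) * p t - α) := by
  refine ⟨fun t => ?_, fun t => ?_⟩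
  · have hpt := hp0 t
    rw [((hq t).hasDerivAt.add_const_div α (hp t).hasDerivAt hpt).deriv, h1, h2]
    field_simp
    ring
  · have hpt := hp0 t
    rw [h2]
    field_simp
    ring
end

section
/- Suppose q, p : ℝ → ℝ are differentiable functions satisfying q'(t) = p(t) − q(t)² − t/2 and p'(t) = 2q(t)p(t) + α. Then Q(t) = −q(t) and P(t) = −p(t) + 2q(t)² + t satisfy Q' = P − Q² − t/2 and P' = 2QP + (1 − α). -/
theorem hasDerivAt_neg_add_two_mul_sq_add_id {𝕜 : Type*} [NontriviallyNormedField 𝕜]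
    {q p : 𝕜 → 𝕜} {q' p' t : 𝕜}
    (hq : HasDerivAt q q' t) (hp : HasDerivAt p p' t) :
    HasDerivAt (fun s => -p s + 2 * q s ^ 2 + s) (-p' + 4 * q t * q' + 1) t := by
  refine ((hp.neg.add ((hq.pow 2).const_mul 2)).add (hasDerivAt_id t)).congr_deriv ?_
  ring

/-- The Bäcklund transformation `π(q,p) = (−q, −p + 2q² + t)` maps solutions of the Hamiltonian
system of P_II(α) to solutions of the Hamiltonian system of P_II(1−α). -/
theorem stmt3 (α : ℝ) (q p : ℝ → ℝ)
    (hq : Differentiable ℝ q) (hp : Differentiable ℝ p)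
    (h1 : ∀ t, deriv q t = p t - q t ^ 2 - t / 2)
    (h2 : ∀ t, deriv p t = 2 * q t * p t + α) :
    (∀ t, deriv (fun s => -q s) t
        = (-p t + 2 * q t ^ 2 + t) - (-q t) ^ 2 - t / 2) ∧
    (∀ t, deriv (fun s => -p s + 2 * q s ^ 2 + s) t
        = 2 * (-q t) * (-p t + 2 * q t ^ 2 + t) + (1 - α)) := by
  refine ⟨fun t => ?_, fun t => ?_⟩
  · rw [deriv.fun_neg, h1]
    ring
  · have hP := hasDerivAt_neg_add_two_mul_sq_add_id (hq t).hasDerivAt (hp t).hasDerivAt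
    rw [hP.deriv, h1, h2]
    ring
end

section
/- Let s₁ and s₂ be the birational maps on (q, p, a₁, a₂) given by s₁(q, p, a₁, a₂) = (q, p − a₁/q, −a₁, a₁ + a₂) and s₂(q, p, a₁, a₂) = (q + a₂/p, p, a₁ + a₂, −a₂). Then s₁∘s₂∘s₁ = s₂∘s₁∘s₂ as birational maps (i.e. the maps agree wherever both compositions are defined). -/
/-!
Both triple composites send `(q, p, a₁, a₂)` to
`(q (qp + a₂)/(qp − a₁), p (qp − a₁)/(qp + a₂), −a₂, −a₁)`. The only denominators met along
the way are `q`, `p`, `qp − a₁` and `qp + a₂`, so each side reduces to this closed form as soon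
as those are nonzero.
-/

/-- The Bäcklund transformation `s₁` of P_IV:
`s₁(q, p, a₁, a₂) = (q, p − a₁/q, −a₁, a₁ + a₂)`. -/
noncomputable def PIVs₁ {K : Type*} [Field K] (v : K × K × K × K) : K × K × K × K :=
  (v.1, v.2.1 - v.2.2.1 / v.1, -v.2.2.1, v.2.2.1 + v.2.2.2)

/-- The Bäcklund transformation `s₂` of P_IV:
`s₂(q, p, a₁, a₂) = (q + a₂/p, p, a₁ + a₂, −a₂)`. -/
noncomputable def PIVs₂ {K : Type*} [Field K] (v : K × K × K × K) : K × K × K × K :=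
  (v.1 + v.2.2.2 / v.2.1, v.2.1, v.2.2.1 + v.2.2.2, -v.2.2.2)

section
variable {K : Type*} [Field K] (q p a b : K)

lemma PIVs₁_snd_fst (hq : q ≠ 0) : (PIVs₁ (q, p, a, b)).2.1 = (q * p - a) / q := by
  simp only [PIVs₁]
  field_simp

lemma PIVs₂_fst (hp : p ≠ 0) : (PIVs₂ (q, p, a, b)).1 = (q * p + b) / p := by
  simp only [PIVs₂]
  field_simp

lemma PIVs₁_PIVs₂_PIVs₁ (hq : q ≠ 0) (ha : q * p - a ≠ 0) (hb : q * p + b ≠ 0) :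
    PIVs₁ (PIVs₂ (PIVs₁ (q, p, a, b))) =
      (q * (q * p + b) / (q * p - a), p * (q * p - a) / (q * p + b), -b, -a) := by
  have hP : p - a / q = (q * p - a) / q := by field_simp
  have hQ : q + (a + b) / ((q * p - a) / q) = q * (q * p + b) / (q * p - a) := by
    field_simp
    ring
  simp only [PIVs₁, PIVs₂, hP, hQ, Prod.mk.injEq]
  refine ⟨trivial, ?_, by ring, by ring⟩
  rw [div_div_eq_mul_div, div_sub_div _ _ hq (mul_ne_zero hq hb),
    div_eq_div_iff (mul_ne_zero hq (mul_ne_zero hq hb)) hb]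
  ring

lemma PIVs₂_PIVs₁_PIVs₂ (hp : p ≠ 0) (ha : q * p - a ≠ 0) (hb : q * p + b ≠ 0) :
    PIVs₂ (PIVs₁ (PIVs₂ (q, p, a, b))) =
      (q * (q * p + b) / (q * p - a), p * (q * p - a) / (q * p + b), -b, -a) := by
  have hQ : q + b / p = (q * p + b) / p := by field_simp
  have hP : p - (a + b) / ((q * p + b) / p) = p * (q * p - a) / (q * p + b) := by
    rw [div_div_eq_mul_div, eq_div_iff hb, sub_mul, div_mul_cancel₀ _ hb]
    ring
  simp only [PIVs₁, PIVs₂, hQ, hP, Prod.mk.injEq]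
  refine ⟨?_, trivial, by ring, by ring⟩
  field_simp
  ring

end

theorem stmt6_general {K : Type*} [Field K] (v : K × K × K × K)
    (h1 : v.1 ≠ 0) (h2 : (PIVs₁ v).2.1 ≠ 0)
    (h4 : v.2.1 ≠ 0) (h5 : (PIVs₂ v).1 ≠ 0) :
    PIVs₁ (PIVs₂ (PIVs₁ v)) = PIVs₂ (PIVs₁ (PIVs₂ v)) := by
  obtain ⟨q, p, a, b⟩ := v
  have ha : q * p - a ≠ 0 := (div_ne_zero_iff.mp (PIVs₁_snd_fst q p a b h1 ▸ h2)).1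
  have hb : q * p + b ≠ 0 := (div_ne_zero_iff.mp (PIVs₂_fst q p a b h4 ▸ h5)).1
  rw [PIVs₁_PIVs₂_PIVs₁ q p a b h1 ha hb, PIVs₂_PIVs₁_PIVs₂ q p a b h4 ha hb]

/-- The braid relation `s₁∘s₂∘s₁ = s₂∘s₁∘s₂` for the Bäcklund transformations of P_IV,
wherever both compositions are defined (no denominator along either composition vanishes). -/
theorem stmt6 {K : Type*} [Field K] (v : K × K × K × K)
    (h1 : v.1 ≠ 0) (h2 : (PIVs₁ v).2.1 ≠ 0) (h3 : (PIVs₂ (PIVs₁ v)).1 ≠ 0)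
    (h4 : v.2.1 ≠ 0) (h5 : (PIVs₂ v).1 ≠ 0) (h6 : (PIVs₁ (PIVs₂ v)).2.1 ≠ 0) :
    PIVs₁ (PIVs₂ (PIVs₁ v)) = PIVs₂ (PIVs₁ (PIVs₂ v)) :=
  stmt6_general v h1 h2 h4 h5
end

section
/- Let A be an associative ℂ-algebra containing elements x, y, t, ε₁, ε₂, α₀, α₁ with yx − xy = ε₁, where t, ε₁, ε₂, α₀, α₁ are central, commute with x and y, and satisfy α₀ + α₁ = −ε₁ + ε₂. Define H(X, Y, α) = Y²/2 − XYX − (t/2)Y − αX. Then H(−x, −y + 2x² + t, α₀) = H(x, y, α₁) − (ε₁ − ε₂)x. -/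
/-- Symmetry of the quantum P_II Hamiltonian `H(X,Y,α) = Y²/2 − XYX − (t/2)Y − αX` under the
quantum Bäcklund transformation `(x, y) ↦ (−x, −y + 2x² + t)`. -/
theorem stmt12 {A : Type*} [Ring A] [Algebra ℂ A]
    (x y t ε₁ ε₂ α₀ α₁ : A)
    (hcomm : y * x - x * y = ε₁)
    (ht : ∀ a : A, Commute t a) (hε₁ : ∀ a : A, Commute ε₁ a)
    (hε₂ : ∀ a : A, Commute ε₂ a) (hα₀ : ∀ a : A, Commute α₀ a)
    (hα₁ : ∀ a : A, Commute α₁ a)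
    (hsum : α₀ + α₁ = -ε₁ + ε₂) :
    let H : A → A → A → A := fun X Y α =>
      (1 / 2 : ℂ) • (Y * Y) - X * Y * X - (1 / 2 : ℂ) • (t * Y) - α * X
    H (-x) (-y + 2 * x ^ 2 + t) α₀ = H x y α₁ - (ε₁ - ε₂) * x := by
  intro H
  have h1 : y * x = x * y + ε₁ := by rw [← hcomm]; abel
  have hα : α₀ = -ε₁ + ε₂ - α₁ := by rw [← hsum]; abel
  have htx : t * x = x * t := (ht x).eq
  have hty : t * y = y * t := (ht y).eq
  have he1x : ε₁ * x = x * ε₁ := (hε₁ x).eq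
  have he1y : ε₁ * y = y * ε₁ := (hε₁ y).eq
  have he2x : ε₂ * x = x * ε₂ := (hε₂ x).eq
  have ha1x : α₁ * x = x * α₁ := (hα₁ x).eq
  simp only [H]
  noncomm_ring
  simp only [← mul_assoc, hα, h1, htx, hty, he1x, he1y, he2x, ha1x, add_mul, sub_mul, neg_mul,
    mul_add, mul_sub, mul_neg, smul_add, smul_sub, smul_neg]
  simp only [mul_assoc, h1, mul_add]
  module
end

section
/- Let A be an associative ring containing central elements t, α and elements q, p with p invertible, where α and t are central and commute with q, p (no commutation assumption between p and q is needed beyond pp⁻¹ = p⁻¹p = 1). Define H(Q, P, α) = P²/2 − QPQ − (t/2)P − αQ. Then H(q + αp⁻¹, p, −α) = H(q, p, α). -/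
/-! The substitution `Q = q + α p⁻¹` changes the ordered term `QPQ` by `2αq + α²p⁻¹` and the
term `-αQ` (with `α` flipped to `-α`) by `2αq + α²p⁻¹` in the opposite direction, so the
Hamiltonian is unchanged. -/

section BacklundShift

variable {A : Type*} [Ring A] {q p pinv a : A}

theorem add_mul_mul_inv_mul (hp' : pinv * p = 1) : (q + a * pinv) * p = q * p + a := by
  rw [add_mul, mul_assoc, hp', mul_one]

theorem mul_mul_mul_inv_of_commute (hp : p * pinv = 1) (haq : Commute a q) (hap : Commute a p) :
    q * p * (a * pinv) = a * q := by
  rw [← mul_assoc, ← (haq.mul_right hap).eq, mul_assoc, mul_assoc q, hp, mul_one]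

theorem shift_mul_mul_shift (hp : p * pinv = 1) (hp' : pinv * p = 1) (haq : Commute a q)
    (hap : Commute a p) :
    (q + a * pinv) * p * (q + a * pinv) = q * p * q + 2 * (a * q) + a * (a * pinv) := by
  rw [add_mul_mul_inv_mul hp', add_mul, mul_add, mul_add,
    mul_mul_mul_inv_of_commute hp haq hap, two_mul]
  abel

end BacklundShift

def quantumPainleveIIHamiltonian {A : Type*} [Ring A] [Module ℚ A] (t Q P β : A) : A :=
  (1 / 2 : ℚ) • (P * P) - Q * P * Q - (1 / 2 : ℚ) • (t * P) - β * Q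

theorem quantumPainleveIIHamiltonian_backlund {A : Type*} [Ring A] [Module ℚ A]
    {q p pinv α : A} (t : A) (hp : p * pinv = 1) (hp' : pinv * p = 1)
    (hαq : Commute α q) (hαp : Commute α p) :
    quantumPainleveIIHamiltonian t (q + α * pinv) p (-α) =
      quantumPainleveIIHamiltonian t q p α := by
  rw [quantumPainleveIIHamiltonian, quantumPainleveIIHamiltonian,
    shift_mul_mul_shift hp hp' hαq hαp, neg_mul, mul_add, two_mul]
  abel

theorem stmt13_general {A : Type*} [Ring A] [Algebra ℚ A]
    (q p pinv t α : A)
    (hp : p * pinv = 1) (hp' : pinv * p = 1)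
    (hαq : Commute α q) (hαp : Commute α p) :
    let H : A → A → A → A := fun Q P β =>
      (1 / 2 : ℚ) • (P * P) - Q * P * Q - (1 / 2 : ℚ) • (t * P) - β * Q
    H (q + α * pinv) p (-α) = H q p α :=
  quantumPainleveIIHamiltonian_backlund t hp hp' hαq hαp

/-- The quantum Bäcklund transformation `(q, p) ↦ (q + αp⁻¹, p)` preserves the symmetrically
ordered quantum P_II Hamiltonian `H(Q,P,α) = P²/2 − QPQ − (t/2)P − αQ` while flipping `α`. -/
theorem stmt13 {A : Type*} [Ring A] [Algebra ℚ A]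
    (q p pinv t α : A)
    (hp : p * pinv = 1) (hp' : pinv * p = 1)
    (htq : Commute t q) (htp : Commute t p)
    (hαq : Commute α q) (hαp : Commute α p) :
    let H : A → A → A → A := fun Q P β =>
      (1 / 2 : ℚ) • (P * P) - Q * P * Q - (1 / 2 : ℚ) • (t * P) - β * Q
    H (q + α * pinv) p (-α) = H q p α :=
  stmt13_general q p pinv t α hp hp' hαq hαp
end

section
/- Let A be an associative ring containing central elements t, α₁, α₂ and elements q, p with p invertible (α₁, α₂, t commute with everything). Define H(Q, P, β₁, β₂) = PQP − QPQ − tQP − β₂Q − β₁P. Then H(q + α₂p⁻¹, p, α₁ + α₂, −α₂) = H(q, p, α₁, α₂) − α₂t. -/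
/-- The quantum Bäcklund transformation `s₂` of the quantum P_IV Hamiltonian
`H(Q,P,β₁,β₂) = PQP − QPQ − tQP − β₂Q − β₁P`:  under `(q, p) ↦ (q + α₂p⁻¹, p)` with
`(α₁, α₂) ↦ (α₁ + α₂, −α₂)`, the Hamiltonian changes by the additive constant `−α₂t`. -/
theorem stmt14 {A : Type*} [Ring A]
    (q p pinv t α₁ α₂ : A)
    (hp : p * pinv = 1) (hp' : pinv * p = 1)
    (ht : ∀ a : A, Commute t a) (hα₁ : ∀ a : A, Commute α₁ a)
    (hα₂ : ∀ a : A, Commute α₂ a) :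
    let H : A → A → A → A → A := fun Q P β₁ β₂ =>
      P * Q * P - Q * P * Q - t * Q * P - β₂ * Q - β₁ * P
    H (q + α₂ * pinv) p (α₁ + α₂) (-α₂) = H q p α₁ α₂ - α₂ * t := by
  intro H
  show p * (q + α₂ * pinv) * p - (q + α₂ * pinv) * p * (q + α₂ * pinv)
      - t * (q + α₂ * pinv) * p - (-α₂) * (q + α₂ * pinv) - (α₁ + α₂) * p
      = p * q * p - q * p * q - t * q * p - α₂ * q - α₁ * p - α₂ * t
  have h1 : p * (α₂ * pinv) * p = α₂ * p := by
    rw [← mul_assoc, ← (hα₂ p).eq, mul_assoc, mul_assoc, hp', mul_one]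
  have h2 : q * p * (α₂ * pinv) = α₂ * q := by
    rw [← mul_assoc, ← (hα₂ (q*p)).eq, mul_assoc, mul_assoc, hp, mul_one]
  have h3 : (α₂ * pinv) * p * q = α₂ * q := by
    rw [mul_assoc α₂, hp', mul_one]
  have h4 : (α₂ * pinv) * p * (α₂ * pinv) = α₂ * (α₂ * pinv) := by
    rw [mul_assoc α₂, hp', mul_one]
  have h5 : t * (α₂ * pinv) * p = α₂ * t := by
    rw [← mul_assoc, mul_assoc (t*α₂), hp', mul_one, (ht α₂).eq]
  simp only [mul_add, add_mul, neg_mul]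
  rw [h1, h2, h3, h4, h5]
  abel
end

section
/- Let s₂ and s₄ be the birational maps on (q, p, a₀, a₁, a₂, a₃, a₄) defined by s₂: q ↦ q + a₂/p, (a₀, a₁, a₂, a₃, a₄) ↦ (a₀+a₂, a₁+a₂, −a₂, a₃+a₂, a₄+a₂) (p fixed), and s₄: p ↦ p − a₄/q, (a₂, a₄) ↦ (a₂+a₄, −a₄) (q, a₀, a₁, a₃ fixed). Then s₂∘s₄∘s₂ = s₄∘s₂∘s₄ as birational maps. -/
/-- The Bäcklund transformation `s₂` of P_VI on `(q, p, a₀, a₁, a₂, a₃, a₄)`: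
`q ↦ q + a₂/p`, `(a₀,a₁,a₂,a₃,a₄) ↦ (a₀+a₂, a₁+a₂, −a₂, a₃+a₂, a₄+a₂)`. -/
noncomputable def PVIs₂ {K : Type*} [Field K] (v : K × K × K × K × K × K × K) :
    K × K × K × K × K × K × K :=
  (v.1 + v.2.2.2.2.1 / v.2.1, v.2.1, v.2.2.1 + v.2.2.2.2.1, v.2.2.2.1 + v.2.2.2.2.1,
    -v.2.2.2.2.1, v.2.2.2.2.2.1 + v.2.2.2.2.1, v.2.2.2.2.2.2 + v.2.2.2.2.1)

/-- The Bäcklund transformation `s₄` of P_VI on `(q, p, a₀, a₁, a₂, a₃, a₄)`: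
`p ↦ p − a₄/q`, `(a₂,a₄) ↦ (a₂+a₄, −a₄)`. -/
noncomputable def PVIs₄ {K : Type*} [Field K] (v : K × K × K × K × K × K × K) :
    K × K × K × K × K × K × K :=
  (v.1, v.2.1 - v.2.2.2.2.2.2 / v.1, v.2.2.1, v.2.2.2.1,
    v.2.2.2.2.1 + v.2.2.2.2.2.2, v.2.2.2.2.2.1, -v.2.2.2.2.2.2)

/-!
Both maps move the product `p q` by a parameter: `s₂` sends `p q` to `p q + a₂` and `s₄` sends it
to `p q - a₄`. Tracking `p q` along the two compositions shows that each one sends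
`(q, p)` to `(q (p q + a₂) / (p q - a₄), p (p q - a₄) / (p q + a₂))`, and both act on the
parameters as the reflection in the root `α₂ + α₄`.
-/

section
variable {K : Type*} [Field K] {q p a₀ a₁ a₂ a₃ a₄ : K}

lemma PVIs₂_apply : PVIs₂ (q, p, a₀, a₁, a₂, a₃, a₄) =
    (q + a₂ / p, p, a₀ + a₂, a₁ + a₂, -a₂, a₃ + a₂, a₄ + a₂) := rfl

lemma PVIs₄_apply : PVIs₄ (q, p, a₀, a₁, a₂, a₃, a₄) =
    (q, p - a₄ / q, a₀, a₁, a₂ + a₄, a₃, -a₄) := rfl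

lemma PVIs₂_fst_mul (hp : p ≠ 0) : p * (PVIs₂ (q, p, a₀, a₁, a₂, a₃, a₄)).1 = p * q + a₂ := by
  simp only [PVIs₂_apply]
  field_simp

lemma PVIs₄_snd_mul (hq : q ≠ 0) : (PVIs₄ (q, p, a₀, a₁, a₂, a₃, a₄)).2.1 * q = p * q - a₄ := by
  simp only [PVIs₄_apply]
  field_simp

lemma PVIs₂_PVIs₄_PVIs₂_apply (hp : p ≠ 0) (hA : p * q + a₂ ≠ 0) (hB : p * q - a₄ ≠ 0) :
    PVIs₂ (PVIs₄ (PVIs₂ (q, p, a₀, a₁, a₂, a₃, a₄))) =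
      (q * (p * q + a₂) / (p * q - a₄), p * (p * q - a₄) / (p * q + a₂),
        a₀ + a₂ + a₄, a₁ + a₂ + a₄, -a₄, a₃ + a₂ + a₄, -a₂) := by
  have hq₁ : q + a₂ / p = (p * q + a₂) / p := by field_simp
  have hp₁ : p - (a₄ + a₂) / ((p * q + a₂) / p) = p * (p * q - a₄) / (p * q + a₂) := by
    rw [div_div_eq_mul_div]; field_simp; ring
  simp only [PVIs₂_apply, PVIs₄_apply, hq₁, hp₁, Prod.mk.injEq]
  refine ⟨?_, trivial, by ring, by ring, by ring, by ring, by ring⟩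
  field_simp
  ring

lemma PVIs₄_PVIs₂_PVIs₄_apply (hq : q ≠ 0) (hA : p * q + a₂ ≠ 0) (hB : p * q - a₄ ≠ 0) :
    PVIs₄ (PVIs₂ (PVIs₄ (q, p, a₀, a₁, a₂, a₃, a₄))) =
      (q * (p * q + a₂) / (p * q - a₄), p * (p * q - a₄) / (p * q + a₂),
        a₀ + a₂ + a₄, a₁ + a₂ + a₄, -a₄, a₃ + a₂ + a₄, -a₂) := by
  have hp₁ : p - a₄ / q = (p * q - a₄) / q := by field_simp
  have hq₁ : q + (a₂ + a₄) / ((p * q - a₄) / q) = q * (p * q + a₂) / (p * q - a₄) := by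
    rw [div_div_eq_mul_div, eq_div_iff hB, add_mul, div_mul_cancel₀ _ hB]; ring
  simp only [PVIs₂_apply, PVIs₄_apply, hq₁, hp₁, Prod.mk.injEq]
  refine ⟨trivial, ?_, by ring, by ring, by ring, by ring, by ring⟩
  field_simp
  ring

end

theorem stmt18_general {K : Type*} [Field K] (v : K × K × K × K × K × K × K)
    (h1 : v.2.1 ≠ 0) (h2 : (PVIs₂ v).1 ≠ 0)
    (h4 : v.1 ≠ 0) (h5 : (PVIs₄ v).2.1 ≠ 0) :
    PVIs₂ (PVIs₄ (PVIs₂ v)) = PVIs₄ (PVIs₂ (PVIs₄ v)) := by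
  obtain ⟨q, p, a₀, a₁, a₂, a₃, a₄⟩ := v
  have hA : p * q + a₂ ≠ 0 := by
    rw [← PVIs₂_fst_mul h1]
    exact mul_ne_zero h1 h2
  have hB : p * q - a₄ ≠ 0 := by
    rw [← PVIs₄_snd_mul h4]
    exact mul_ne_zero h5 h4
  rw [PVIs₂_PVIs₄_PVIs₂_apply h1 hA hB, PVIs₄_PVIs₂_PVIs₄_apply h4 hA hB]

/-- The braid relation `s₂∘s₄∘s₂ = s₄∘s₂∘s₄` for the Bäcklund transformations of P_VI
(nodes 2 and 4 are adjacent in the `D₄⁽¹⁾` Dynkin diagram), wherever both compositions are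
defined (no denominator along either composition vanishes). -/
theorem stmt18 {K : Type*} [Field K] (v : K × K × K × K × K × K × K)
    (h1 : v.2.1 ≠ 0) (h2 : (PVIs₂ v).1 ≠ 0) (h3 : (PVIs₄ (PVIs₂ v)).2.1 ≠ 0)
    (h4 : v.1 ≠ 0) (h5 : (PVIs₄ v).2.1 ≠ 0) (h6 : (PVIs₂ (PVIs₄ v)).1 ≠ 0) :
    PVIs₂ (PVIs₄ (PVIs₂ v)) = PVIs₄ (PVIs₂ (PVIs₄ v)) :=
  stmt18_general v h1 h2 h4 h5
end
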